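/- arXiv:math/0601015 — 7 statements merged into one kernel-verified Lean document; each statement's English description precedes it below -/
import Mathlib

section
/- The normalized Haar (Lebesgue) measure λ on the torus ℂ/Ω is invariant under every non-constant affine map t ↦ at + b with a·Ω ⊆ Ω, and if |a|² ≥ 2 this map is ergodic with respect to λ. -/
/-!
Multiplication by `a` descends to a continuous surjective endomorphism `φ` of the compact group
`ℂ ⧸ L`, so it preserves Haar measure by uniqueness of Haar measure, and so does `f = φ + b`.
If `‖a‖ > 1`, the points `u` with `a ^ k * u ∈ L` for some `k` are dense, being the union of the
ever finer lattices `a⁻ᵏ L`. For such `u` we have `f^[k] (u + y) = f^[k] y`, so an `f`-invariant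
set is invariant under a dense set of translations, hence null or conull.
-/

open MeasureTheory Set Function

section Lattice

variable {E : Type*} [NormedAddCommGroup E] [NormedSpace ℝ E] [FiniteDimensional ℝ E]
  (L : Submodule ℤ E) [DiscreteTopology L] [IsZLattice ℝ L]

instance IsZLattice.compactSpace_quotient : CompactSpace (E ⧸ L.toAddSubgroup) where
  isCompact_univ := by
    rw [← QuotientAddGroup.mk_surjective.range_eq]
    exact IsZLattice.isCompact_range_of_periodic L _ continuous_quot_mk fun z w hw => by
      simpa using (QuotientAddGroup.eq_zero_iff (N := L.toAddSubgroup) w).2 hw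

theorem IsZLattice.exists_forall_exists_mem_norm_sub_le : ∃ R, ∀ z : E, ∃ ℓ ∈ L, ‖z - ℓ‖ ≤ R := by
  have := ZLattice.module_free ℝ L
  let b := Module.Free.chooseBasis ℤ L
  let B := b.ofZLatticeBasis ℝ L
  refine ⟨∑ i, ‖B i‖, fun z => ⟨ZSpan.floor B z, ?_, ?_⟩⟩
  · exact (b.ofZLatticeBasis_span ℝ L).le (ZSpan.floor B z).2
  · rw [← ZSpan.fract_apply]; exact ZSpan.norm_fract_le B z

end Lattice

namespace AddMonoidHom

theorem iterate_add_const_apply_add {G : Type*} [AddMonoid G] (φ : G →+ G) (c : G) (n : ℕ)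
    (x y : G) : (fun z => φ z + c)^[n] (x + y) = φ^[n] x + (fun z => φ z + c)^[n] y := by
  induction n generalizing x y with
  | zero => rfl
  | succ n ih => simp only [iterate_succ_apply, map_add, add_assoc, ih]

variable {G : Type*} [AddGroup G] [TopologicalSpace G] [IsTopologicalAddGroup G]
  [SecondCountableTopology G] [MeasurableSpace G] [BorelSpace G]

theorem preErgodic_add_const_of_dense_iUnion_preimage_zero {μ : Measure G} [IsFiniteMeasure μ]
    [μ.InnerRegular] [μ.IsAddLeftInvariant] (φ : G →+ G) (hφ : Dense (⋃ n, φ^[n] ⁻¹' {0}))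
    (c : G) : PreErgodic (fun x => φ x + c) μ := by
  refine ⟨fun s hsm hs ↦
    aeconst_of_dense_setOfPred_preimage_vadd_eq (M := G) hsm.nullMeasurableSet ?_⟩
  refine hφ.mono <| iUnion_subset fun n x hx ↦ ?_
  have hsn : (fun z => φ z + c)^[n] ⁻¹' s = s := by
    rw [preimage_iterate_eq, iterate_fixed hs]
  rw [mem_preimage, mem_singleton_iff] at hx
  rw [mem_ofPred_eq, ← hsn]
  ext y
  simp [iterate_add_const_apply_add, hx]

end AddMonoidHom

theorem dense_setOf_exists_pow_mul_mem (L : Submodule ℤ ℂ) [DiscreteTopology L]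
    [IsZLattice ℝ L] {a : ℂ} (ha : 1 < ‖a‖) : Dense {u : ℂ | ∃ k : ℕ, a ^ k * u ∈ L} := by
  obtain ⟨R, hR⟩ := IsZLattice.exists_forall_exists_mem_norm_sub_le L
  refine Metric.dense_iff.2 fun x r hr => ?_
  obtain ⟨k, hk⟩ := ((tendsto_pow_atTop_atTop_of_one_lt ha).eventually_gt_atTop (R / r)).exists
  obtain ⟨ℓ, hℓ, hxℓ⟩ := hR (a ^ k * x)
  have hak : a ^ k ≠ 0 := pow_ne_zero k (norm_pos_iff.1 (one_pos.trans ha))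
  refine ⟨ℓ / a ^ k, ?_, k, by rwa [mul_div_cancel₀ _ hak]⟩
  have hpos : 0 < ‖a‖ ^ k := by positivity
  rw [Metric.mem_ball, dist_eq_norm, ← norm_neg, neg_sub, ← mul_div_cancel_left₀ x hak, ← sub_div,
    norm_div, norm_pow, div_lt_iff₀ hpos]
  rw [div_lt_iff₀ hr] at hk
  linarith

section Torus

variable (L : Submodule ℤ ℂ) (a : ℂ) (haL : ∀ z ∈ L, a * z ∈ L)

def torusMulLeft : ℂ ⧸ L.toAddSubgroup →+ ℂ ⧸ L.toAddSubgroup :=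
  QuotientAddGroup.map _ _ (AddMonoidHom.mulLeft a) haL

@[simp]
theorem torusMulLeft_mk (t : ℂ) : torusMulLeft L a haL t = (a * t : ℂ) := rfl

theorem iterate_torusMulLeft_mk (n : ℕ) (t : ℂ) :
    (torusMulLeft L a haL)^[n] t = (a ^ n * t : ℂ) := by
  induction n generalizing t with
  | zero => simp
  | succ n ih => rw [iterate_succ_apply, torusMulLeft_mk, ih, pow_succ, mul_assoc]

theorem continuous_torusMulLeft : Continuous (torusMulLeft L a haL) :=
  (QuotientAddGroup.isQuotientMap_mk L.toAddSubgroup).continuous_iff.2 <|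
    continuous_quot_mk.comp (continuous_const_mul a)

theorem surjective_torusMulLeft (ha : a ≠ 0) : Surjective (torusMulLeft L a haL) :=
  QuotientAddGroup.mk_surjective.forall.2 fun z =>
    ⟨(a⁻¹ * z : ℂ), by rw [torusMulLeft_mk, mul_inv_cancel_left₀ ha]⟩

theorem dense_iUnion_preimage_iterate_torusMulLeft [DiscreteTopology L] [IsZLattice ℝ L]
    (ha : 1 < ‖a‖) : Dense (⋃ n, (torusMulLeft L a haL)^[n] ⁻¹' {0}) := by
  refine (QuotientAddGroup.mk_surjective.denseRange.dense_image continuous_quot_mk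
    (dense_setOf_exists_pow_mul_mem L ha)).mono ?_
  rintro _ ⟨u, ⟨n, hn⟩, rfl⟩
  exact mem_iUnion.2 ⟨n, by
    rw [mem_preimage, iterate_torusMulLeft_mk, mem_singleton_iff, QuotientAddGroup.eq_zero_iff]
    exact hn⟩

end Torus

theorem torus_haar_invariant_and_ergodic_general (L : Submodule ℤ ℂ) [DiscreteTopology L]
    [IsZLattice ℝ L]
    [MeasurableSpace (ℂ ⧸ L.toAddSubgroup)] [BorelSpace (ℂ ⧸ L.toAddSubgroup)]
    (μ : Measure (ℂ ⧸ L.toAddSubgroup)) [μ.IsAddHaarMeasure]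
    (a b : ℂ) (ha : a ≠ 0) (haL : ∀ z ∈ L, a * z ∈ L)
    (f : ℂ ⧸ L.toAddSubgroup → ℂ ⧸ L.toAddSubgroup)
    (hf : ∀ t : ℂ, f (QuotientAddGroup.mk t) = QuotientAddGroup.mk (a * t + b)) :
    MeasurePreserving f μ μ ∧ (2 ≤ ‖a‖ ^ 2 → Ergodic f μ) := by
  set φ := torusMulLeft L a haL
  obtain rfl : f = fun x => φ x + (b : ℂ ⧸ L.toAddSubgroup) :=
    funext <| QuotientAddGroup.mk_surjective.forall.2 fun t => hf t
  have hmp : MeasurePreserving (fun x => φ x + (b : ℂ ⧸ L.toAddSubgroup)) μ μ :=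
    (measurePreserving_add_right μ _).comp <|
      φ.measurePreserving (continuous_torusMulLeft L a haL) (surjective_torusMulLeft L a haL ha) rfl
  refine ⟨hmp, fun ha2 => ⟨hmp, φ.preErgodic_add_const_of_dense_iUnion_preimage_zero ?_ _⟩⟩
  exact dense_iUnion_preimage_iterate_torusMulLeft L a haL (by nlinarith [norm_nonneg a])

/-- **Invariance and ergodicity of the canonical measure** (§2).
Let `Ω ⊂ ℂ` be a lattice and `λ` the normalized Haar (Lebesgue) probability measure on the
torus `ℂ/Ω`.  Every non-constant affine map `t ↦ at + b` with `a·Ω ⊆ Ω` (i.e. `a ≠ 0`)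
induces a self-map `f` of `ℂ/Ω` preserving `λ`, and if `|a|² ≥ 2` then `f` is ergodic with
respect to `λ`. -/
theorem torus_haar_invariant_and_ergodic (L : Submodule ℤ ℂ) [DiscreteTopology L]
    [IsZLattice ℝ L]
    [MeasurableSpace (ℂ ⧸ L.toAddSubgroup)] [BorelSpace (ℂ ⧸ L.toAddSubgroup)]
    (μ : Measure (ℂ ⧸ L.toAddSubgroup)) [μ.IsAddHaarMeasure] [IsProbabilityMeasure μ]
    (a b : ℂ) (ha : a ≠ 0) (haL : ∀ z ∈ L, a * z ∈ L)
    (f : ℂ ⧸ L.toAddSubgroup → ℂ ⧸ L.toAddSubgroup)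
    (hf : ∀ t : ℂ, f (QuotientAddGroup.mk t) = QuotientAddGroup.mk (a * t + b)) :
    MeasurePreserving f μ μ ∧ (2 ≤ ‖a‖ ^ 2 → Ergodic f μ) :=
  torus_haar_invariant_and_ergodic_general L μ a b ha haL f hf
end

section
/- For the classical Desboves map f₀(x:y:z) = (x(y³−z³) : y(z³−x³) : z(x³−y³)), the rational function η = (x³+y³+z³)/(3xyz) is a first integral: η(f₀(x:y:z)) = η(x:y:z) wherever both sides are defined. -/
/-!
With `a = x³, b = y³, c = z³`, the cubes of the coordinates of `f₀(x,y,z)` are `a(b−c)³`,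
`b(c−a)³`, `c(a−b)³`, and `a(b−c)³ + b(c−a)³ + c(a−b)³ = (a+b+c)(b−c)(c−a)(a−b)`.
The product of the coordinates is `xyz·(b−c)(c−a)(a−b)`, so `f₀` multiplies both the numerator
and the denominator of `η` by the same factor `(b−c)(c−a)(a−b)`.
-/

/-- `Φ(x,y,z) = x³ + y³ + z³`. -/
noncomputable def fermatPhi (x y z : ℂ) : ℂ := x ^ 3 + y ^ 3 + z ^ 3

/-- The classical Desboves map `f₀(x:y:z) = (x(y³−z³) : y(z³−x³) : z(x³−y³))`,
written on homogeneous representatives in `ℂ³`. -/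
noncomputable def desbovesF0 (x y z : ℂ) : ℂ × ℂ × ℂ :=
  (x * (y ^ 3 - z ^ 3), y * (z ^ 3 - x ^ 3), z * (x ^ 3 - y ^ 3))

theorem cyclic_mul_sub_pow_three_sum {R : Type*} [CommRing R] (a b c : R) :
    a * (b - c) ^ 3 + b * (c - a) ^ 3 + c * (a - b) ^ 3 =
      (a + b + c) * ((b - c) * (c - a) * (a - b)) := by
  ring

theorem fermatPhi_desbovesF0 (x y z : ℂ) :
    fermatPhi (desbovesF0 x y z).1 (desbovesF0 x y z).2.1 (desbovesF0 x y z).2.2 =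
      fermatPhi x y z * ((y ^ 3 - z ^ 3) * (z ^ 3 - x ^ 3) * (x ^ 3 - y ^ 3)) := by
  simp only [fermatPhi, desbovesF0]
  linear_combination cyclic_mul_sub_pow_three_sum (x ^ 3) (y ^ 3) (z ^ 3)

theorem three_mul_desbovesF0_prod (x y z : ℂ) :
    3 * (desbovesF0 x y z).1 * (desbovesF0 x y z).2.1 * (desbovesF0 x y z).2.2 =
      3 * x * y * z * ((y ^ 3 - z ^ 3) * (z ^ 3 - x ^ 3) * (x ^ 3 - y ^ 3)) := by
  simp only [desbovesF0]
  ring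

/-- **First integral of the classical Desboves map** (§3).
The rational function `η = (x³+y³+z³)/(3xyz)` satisfies `η(f₀(x:y:z)) = η(x:y:z)` wherever
both sides are defined.  On homogeneous representatives this is the cross-multiplied
polynomial identity `Φ(f₀(v))·3xyz = Φ(v)·3XYZ`, together with the equality of the two
ratios whenever both denominators are nonzero. -/
theorem desboves_first_integral (x y z : ℂ) :
    fermatPhi (desbovesF0 x y z).1 (desbovesF0 x y z).2.1 (desbovesF0 x y z).2.2 *
        (3 * x * y * z) =
      fermatPhi x y z *
        (3 * (desbovesF0 x y z).1 * (desbovesF0 x y z).2.1 * (desbovesF0 x y z).2.2) ∧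
    (3 * x * y * z ≠ 0 →
      3 * (desbovesF0 x y z).1 * (desbovesF0 x y z).2.1 * (desbovesF0 x y z).2.2 ≠ 0 →
      fermatPhi (desbovesF0 x y z).1 (desbovesF0 x y z).2.1 (desbovesF0 x y z).2.2 /
          (3 * (desbovesF0 x y z).1 * (desbovesF0 x y z).2.1 * (desbovesF0 x y z).2.2) =
        fermatPhi x y z / (3 * x * y * z)) := by
  rw [fermatPhi_desbovesF0, three_mul_desbovesF0_prod]
  refine ⟨by ring, fun _ hdenom => ?_⟩
  exact mul_div_mul_right _ _ (right_ne_zero_of_mul hdenom)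
end

section
/- The Desboves map f_{a,b,c} is an everywhere defined (regular) holomorphic self-map of ℙ²(ℂ) if and only if abc(a+b+c)(a+1−b)(b+1−c)(c+1−a) ≠ 0. -/
/-- The Desboves map `f_{a,b,c}` on homogeneous representatives in `ℂ³`. -/
noncomputable def desbovesF (a b c : ℂ) (x y z : ℂ) : ℂ × ℂ × ℂ :=
  (x * (y ^ 3 - z ^ 3 + a * fermatPhi x y z),
   y * (z ^ 3 - x ^ 3 + b * fermatPhi x y z),
   z * (x ^ 3 - y ^ 3 + c * fermatPhi x y z))

namespace Desboves

def HasNontrivialZero (a b c : ℂ) : Prop :=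
  ∃ x y z : ℂ, (x, y, z) ≠ ((0 : ℂ), (0 : ℂ), (0 : ℂ)) ∧
    desbovesF a b c x y z = ((0 : ℂ), (0 : ℂ), (0 : ℂ))

lemma desbovesF_rotate (a b c x y z : ℂ) :
    desbovesF b c a y z x =
      ((desbovesF a b c x y z).2.1, (desbovesF a b c x y z).2.2, (desbovesF a b c x y z).1) := by
  simp only [desbovesF, fermatPhi, Prod.mk.injEq]
  refine ⟨?_, ?_, ?_⟩ <;> ring

lemma desbovesF_rotate_eq_zero {a b c x y z : ℂ} (h : desbovesF a b c x y z = (0, 0, 0)) :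
    desbovesF b c a y z x = (0, 0, 0) := by
  rw [desbovesF_rotate, h]

lemma HasNontrivialZero.rotate {a b c : ℂ} (h : HasNontrivialZero a b c) :
    HasNontrivialZero b c a := by
  obtain ⟨x, y, z, hne, hF⟩ := h
  refine ⟨y, z, x, ?_, desbovesF_rotate_eq_zero hF⟩
  simp only [ne_eq, Prod.mk.injEq] at hne ⊢
  tauto

lemma hasNontrivialZero_of_eq_zero {a b c : ℂ} (ha : a = 0) : HasNontrivialZero a b c :=
  ⟨1, 0, 0, by simp, by simp [desbovesF, fermatPhi, ha]⟩

lemma hasNontrivialZero_of_add_one_sub_eq_zero {a b c : ℂ} (h : a + 1 - b = 0) :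
    HasNontrivialZero a b c := by
  obtain ⟨x, hx⟩ := IsAlgClosed.exists_pow_nat_eq (-(1 + a)) three_pos
  obtain ⟨y, hy⟩ := IsAlgClosed.exists_pow_nat_eq a three_pos
  refine ⟨x, y, 0, ?_, ?_⟩
  · rintro ⟨⟩
    have : (1 : ℂ) = 0 := by linear_combination hx + hy
    exact one_ne_zero this
  · simp only [desbovesF, fermatPhi, Prod.mk.injEq]
    refine ⟨?_, ?_, by ring⟩
    · linear_combination (1 + a) * x * hy + a * x * hx
    · linear_combination (b - 1) * y * hx + b * y * hy + y * h

/-- The coordinates solve `Q₁ = Q₂ = 0` normalized by `Φ = 3`; then `Q₃ = (a + b + c) Φ - Q₁ - Q₂`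
vanishes too. -/
lemma hasNontrivialZero_of_add_add_eq_zero {a b c : ℂ} (h : a + b + c = 0) :
    HasNontrivialZero a b c := by
  obtain ⟨x, hx⟩ := IsAlgClosed.exists_pow_nat_eq (1 + a + 2 * b) three_pos
  obtain ⟨y, hy⟩ := IsAlgClosed.exists_pow_nat_eq (1 - 2 * a - b) three_pos
  obtain ⟨z, hz⟩ := IsAlgClosed.exists_pow_nat_eq (1 + a - b) three_pos
  refine ⟨x, y, z, ?_, ?_⟩
  · rintro ⟨⟩
    have : (3 : ℂ) = 0 := by linear_combination -hx - hy - hz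
    exact three_ne_zero this
  · simp only [desbovesF, fermatPhi, Prod.mk.injEq]
    refine ⟨?_, ?_, ?_⟩
    · linear_combination x * hy - x * hz + a * x * (hx + hy + hz)
    · linear_combination y * hz - y * hx + b * y * (hx + hy + hz)
    · linear_combination z * hx - z * hy + c * z * (hx + hy + hz) + 3 * z * h

lemma eq_zero_or_of_desbovesF_eq_zero_of_third_eq_zero {a b c x y : ℂ}
    (hF : desbovesF a b c x y 0 = (0, 0, 0)) (hxy : x ≠ 0 ∨ y ≠ 0) :
    a = 0 ∨ b = 0 ∨ a + 1 - b = 0 := by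
  simp only [desbovesF, fermatPhi, Prod.mk.injEq] at hF
  obtain ⟨h₁, h₂, -⟩ := hF
  rcases eq_or_ne x 0 with rfl | hx
  · have hy : y ≠ 0 := hxy.resolve_left (not_not.2 rfl)
    have : b * y ^ 4 = 0 := by linear_combination h₂
    exact Or.inr (Or.inl ((mul_eq_zero.1 this).resolve_right (pow_ne_zero 4 hy)))
  have hQ₁ : y ^ 3 + a * (x ^ 3 + y ^ 3) = 0 := by
    linear_combination (mul_eq_zero.1 h₁).resolve_left hx
  rcases eq_or_ne y 0 with rfl | hy
  · have : a * x ^ 3 = 0 := by linear_combination hQ₁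
    simp [hx] at this
    exact Or.inl this
  have hQ₂ : -x ^ 3 + b * (x ^ 3 + y ^ 3) = 0 := by
    linear_combination (mul_eq_zero.1 h₂).resolve_left hy
  have : (a + 1 - b) * x ^ 3 = 0 := by linear_combination b * hQ₁ - (1 + a) * hQ₂
  exact Or.inr (Or.inr ((mul_eq_zero.1 this).resolve_right (pow_ne_zero 3 hx)))

lemma add_add_eq_zero_of_desbovesF_eq_zero {a b c x y z : ℂ}
    (hF : desbovesF a b c x y z = (0, 0, 0)) (hx : x ≠ 0) (hy : y ≠ 0) (hz : z ≠ 0) :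
    a + b + c = 0 := by
  simp only [desbovesF, fermatPhi, Prod.mk.injEq] at hF
  obtain ⟨h₁, h₂, h₃⟩ := hF
  have hQ₁ := (mul_eq_zero.1 h₁).resolve_left hx
  have hQ₂ := (mul_eq_zero.1 h₂).resolve_left hy
  have hQ₃ := (mul_eq_zero.1 h₃).resolve_left hz
  have hΦ : x ^ 3 + y ^ 3 + z ^ 3 ≠ 0 := by
    intro hΦ
    have : 3 * x ^ 3 = 0 := by linear_combination (1 + a + 2 * b) * hΦ - hQ₁ - 2 * hQ₂
    simp [hx] at this
  have : (a + b + c) * (x ^ 3 + y ^ 3 + z ^ 3) = 0 := by linear_combination hQ₁ + hQ₂ + hQ₃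
  exact (mul_eq_zero.1 this).resolve_right hΦ

theorem hasNontrivialZero_iff (a b c : ℂ) :
    HasNontrivialZero a b c ↔
      a * b * c * (a + b + c) * (a + 1 - b) * (b + 1 - c) * (c + 1 - a) = 0 := by
  simp only [mul_eq_zero]
  constructor
  · rintro ⟨x, y, z, hne, hF⟩
    simp only [ne_eq, Prod.mk.injEq, not_and_or] at hne
    by_cases hz : z = 0
    · subst hz
      have := eq_zero_or_of_desbovesF_eq_zero_of_third_eq_zero hF (by tauto)
      tauto
    by_cases hx : x = 0
    · subst hx
      have := eq_zero_or_of_desbovesF_eq_zero_of_third_eq_zero (desbovesF_rotate_eq_zero hF)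
        (by tauto)
      tauto
    by_cases hy : y = 0
    · subst hy
      have := eq_zero_or_of_desbovesF_eq_zero_of_third_eq_zero
        (desbovesF_rotate_eq_zero (desbovesF_rotate_eq_zero hF)) (by tauto)
      tauto
    have := add_add_eq_zero_of_desbovesF_eq_zero hF hx hy hz
    tauto
  · rintro ((((((ha | hb) | hc) | habc) | hab) | hbc) | hca)
    · exact hasNontrivialZero_of_eq_zero ha
    · exact (hasNontrivialZero_of_eq_zero hb).rotate.rotate
    · exact (hasNontrivialZero_of_eq_zero hc).rotate
    · exact hasNontrivialZero_of_add_add_eq_zero habc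
    · exact hasNontrivialZero_of_add_one_sub_eq_zero hab
    · exact (hasNontrivialZero_of_add_one_sub_eq_zero hbc).rotate.rotate
    · exact (hasNontrivialZero_of_add_one_sub_eq_zero hca).rotate

end Desboves

open Desboves in
/-- **Regularity criterion for Desboves maps** (Eq. (4.4)).
The Desboves map `f_{a,b,c}` is an everywhere defined (regular) holomorphic self-map of
`ℙ²(ℂ)` — i.e. the three homogeneous quartics have no common zero other than `(0,0,0)` —
if and only if `abc(a+b+c)(a+1−b)(b+1−c)(c+1−a) ≠ 0`. -/
theorem desboves_regular_iff (a b c : ℂ) :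
    (∀ x y z : ℂ, (x, y, z) ≠ ((0 : ℂ), (0 : ℂ), (0 : ℂ)) →
        desbovesF a b c x y z ≠ ((0 : ℂ), (0 : ℂ), (0 : ℂ))) ↔
      a * b * c * (a + b + c) * (a + 1 - b) * (b + 1 - c) * (c + 1 - a) ≠ 0 := by
  rw [ne_eq, ← hasNontrivialZero_iff, HasNontrivialZero]
  push Not
  rfl
end

section
/- For the Desboves map f_{a,b,c}, the restriction to the invariant line x = 0, in the affine coordinate Y = y/z, is the rational map Y ↦ Y·(bY³ + (b+1))/((c−1)Y³ + c), with fixed points at Y = 0, Y = ∞, and the three points with Y³ = −1; the derivatives at these fixed points are respectively (b+1)/c, (c−1)/b, and 3(c−b)−2 (the last at each of the three points with Y³ = −1). -/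
/-- The restriction of `f_{a,b,c}` to the invariant line `x = 0` in the affine coordinate
`Y = y/z`: `Y ↦ Y(bY³ + (b+1))/((c−1)Y³ + c)`. -/
noncomputable def desbovesLine (b c Y : ℂ) : ℂ :=
  Y * (b * Y ^ 3 + (b + 1)) / ((c - 1) * Y ^ 3 + c)

/-- The same map in the coordinate `W = 1/Y` at infinity:
`W ↦ W((c−1) + cW³)/(b + (b+1)W³)`. -/
noncomputable def desbovesLineInf (b c W : ℂ) : ℂ :=
  W * ((c - 1) + c * W ^ 3) / (b + (b + 1) * W ^ 3)

lemma desbovesLine_hasDerivAt (b c Y : ℂ) (hD : (c - 1) * Y ^ 3 + c ≠ 0) :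
    HasDerivAt (desbovesLine b c)
      (((4 * b * Y ^ 3 + (b + 1)) * ((c - 1) * Y ^ 3 + c)
        - Y * (b * Y ^ 3 + (b + 1)) * (3 * (c - 1) * Y ^ 2))
        / ((c - 1) * Y ^ 3 + c) ^ 2) Y := by
  have hN : HasDerivAt (fun Y : ℂ => Y * (b * Y ^ 3 + (b + 1)))
      (4 * b * Y ^ 3 + (b + 1)) Y := by
    have h := (hasDerivAt_id Y).mul (((hasDerivAt_pow 3 Y).const_mul b).add_const (b + 1))
    convert h using 1 <;> try simp only [id_eq]
    all_goals first | rfl | (push_cast; ring)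
  have hDd : HasDerivAt (fun Y : ℂ => (c - 1) * Y ^ 3 + c) (3 * (c - 1) * Y ^ 2) Y := by
    have h := ((hasDerivAt_pow 3 Y).const_mul (c - 1)).add_const c
    convert h using 1 <;> try simp only [id_eq]
    all_goals first | rfl | (push_cast; ring)
  exact hN.div hDd hD

lemma desbovesLineInf_hasDerivAt_zero (b c : ℂ) (hb : b ≠ 0) :
    HasDerivAt (desbovesLineInf b c) ((c - 1) / b) 0 := by
  have hN : HasDerivAt (fun W : ℂ => W * ((c - 1) + c * W ^ 3)) (c - 1) 0 := by
    have h := (hasDerivAt_id (0 : ℂ)).mul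
      (((hasDerivAt_pow 3 (0 : ℂ)).const_mul c).const_add (c - 1))
    convert h using 1 <;> try simp only [id_eq]
    all_goals first | rfl | (push_cast; ring)
  have hDd : HasDerivAt (fun W : ℂ => b + (b + 1) * W ^ 3) 0 0 := by
    have h := ((hasDerivAt_pow 3 (0 : ℂ)).const_mul (b + 1)).const_add b
    convert h using 1 <;> try simp only [id_eq]
    all_goals first | rfl | (push_cast; ring)
  have hD0 : b + (b + 1) * (0 : ℂ) ^ 3 ≠ 0 := by simpa using hb
  have h := hN.div hDd hD0
  convert h using 1
  all_goals first | rfl | (field_simp; ring)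

/-- **The Desboves map on the invariant line `x = 0`** (Remark 4.2).
In the affine coordinate `Y = y/z` the restriction of `f_{a,b,c}` to the line `x = 0` is the
rational map `Y ↦ Y(bY³+(b+1))/((c−1)Y³+c)`, with fixed points at `Y = 0`, at `Y = ∞`
(i.e. `W = 0` in the coordinate `W = 1/Y`), and at the three points with `Y³ = −1`; the
derivatives at these fixed points are respectively `(b+1)/c`, `(c−1)/b`, and `3(c−b)−2`
(the last at each of the three points with `Y³ = −1`). -/
theorem desboves_on_invariant_line (a b c : ℂ) (hb : b ≠ 0) (hc : c ≠ 0) :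
    (∀ y z : ℂ, (desbovesF a b c 0 y z).1 = 0) ∧
    (∀ y z : ℂ, z ≠ 0 → (desbovesF a b c 0 y z).2.2 ≠ 0 →
      (desbovesF a b c 0 y z).2.1 / (desbovesF a b c 0 y z).2.2 =
        desbovesLine b c (y / z)) ∧
    desbovesLine b c 0 = 0 ∧
    (∀ Y : ℂ, Y ^ 3 = -1 → desbovesLine b c Y = Y) ∧
    desbovesLineInf b c 0 = 0 ∧
    deriv (desbovesLine b c) 0 = (b + 1) / c ∧
    deriv (desbovesLineInf b c) 0 = (c - 1) / b ∧
    (∀ Y : ℂ, Y ^ 3 = -1 → deriv (desbovesLine b c) Y = 3 * (c - b) - 2) := by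
  refine ⟨?_, ?_, ?_, ?_, ?_, ?_, ?_, ?_⟩
  · intro y z; simp [desbovesF]
  · intro y z hz hf3
    have hD : (c - 1) * (y / z) ^ 3 + c ≠ 0 := by
      intro h0
      apply hf3
      simp only [desbovesF, fermatPhi] at *
      have : z * ((0:ℂ) ^ 3 - y ^ 3 + c * ((0:ℂ) ^ 3 + y ^ 3 + z ^ 3))
          = z ^ 4 * ((c - 1) * (y / z) ^ 3 + c) := by
        field_simp; ring
      rw [this, h0, mul_zero]
    simp only [desbovesF, fermatPhi, desbovesLine]
    rw [div_eq_div_iff _ (by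
      intro h0
      exact hD (by
        have : (c - 1) * (y / z) ^ 3 + c = 0 := by
          field_simp at h0 ⊢
          linear_combination h0
        exact this))]
    · field_simp; ring
    · simpa [desbovesF, fermatPhi] using ‹(desbovesF a b c 0 y z).2.2 ≠ 0›
  · simp [desbovesLine]
  · intro Y hY
    simp only [desbovesLine]
    rw [hY]
    field_simp
    ring
  · simp [desbovesLineInf]
  · have hD : (c - 1) * (0:ℂ) ^ 3 + c ≠ 0 := by simpa using hc
    have h := (desbovesLine_hasDerivAt b c 0 hD).deriv
    rw [h]; simp; field_simp
  · exact (desbovesLineInf_hasDerivAt_zero b c hb).deriv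
  · intro Y hY
    have hD : (c - 1) * Y ^ 3 + c ≠ 0 := by rw [hY]; ring_nf; exact one_ne_zero
    have h := (desbovesLine_hasDerivAt b c Y hD).deriv
    rw [h]
    have hY2 : Y * (b * Y ^ 3 + (b + 1)) * (3 * (c - 1) * Y ^ 2) = 3 * (c - 1) * Y ^ 3 * (b * Y ^ 3 + (b + 1)) := by ring
    rw [hY2, hY]
    ring_nf
end

section
/- For the elementary Desboves map f = f_{−1,b,1}, the image (x':y':z') = f(x:y:z) satisfies x' = x(−x³−2z³) and z' = z(2x³+z³); hence each line (x:z) = constant through p₀ = (0:1:0) maps to another such line, and the induced map on the base X = x/z is the Lattès map X ↦ −X(X³+2)/(2X³+1), independent of the parameter b. -/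
theorem desbovesF_fst_of_neg_one (b c x y z : ℂ) :
    (desbovesF (-1) b c x y z).1 = x * (-x ^ 3 - 2 * z ^ 3) := by
  simp only [desbovesF, fermatPhi]
  ring

theorem desbovesF_snd_snd_of_one (a b x y z : ℂ) :
    (desbovesF a b 1 x y z).2.2 = z * (2 * x ^ 3 + z ^ 3) := by
  simp only [desbovesF, fermatPhi]
  ring

/-- With `x / 0 = 0`, both sides vanish when `z = 0` or `2x³ + z³ = 0`. -/
theorem lattes_dehomogenize {K : Type*} [Field K] (x z : K) :
    x * (-x ^ 3 - 2 * z ^ 3) / (z * (2 * x ^ 3 + z ^ 3)) =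
      -(x / z) * ((x / z) ^ 3 + 2) / (2 * (x / z) ^ 3 + 1) := by
  rcases eq_or_ne z 0 with rfl | hz
  · simp
  obtain ⟨X, rfl⟩ : ∃ X, x = X * z := ⟨x / z, (div_mul_cancel₀ x hz).symm⟩
  have hz4 : z ^ 4 ≠ 0 := pow_ne_zero 4 hz
  calc X * z * (-(X * z) ^ 3 - 2 * z ^ 3) / (z * (2 * (X * z) ^ 3 + z ^ 3))
      = z ^ 4 * (-X * (X ^ 3 + 2)) / (z ^ 4 * (2 * X ^ 3 + 1)) := by ring_nf
    _ = -X * (X ^ 3 + 2) / (2 * X ^ 3 + 1) := mul_div_mul_left _ _ hz4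
    _ = _ := by rw [mul_div_cancel_right₀ X hz]

/-- **Elementary Desboves maps and the induced Lattès map** (Example 6.1).
For the elementary Desboves map `f = f_{−1,b,1}`, the image `(x':y':z') = f(x:y:z)`
satisfies `x' = x(−x³−2z³)` and `z' = z(2x³+z³)` (independently of `y` and `b`); hence each
line `(x:z) = const` through `p₀ = (0:1:0)` maps to such a line, and the induced map on the
base coordinate `X = x/z` is the Lattès map `X ↦ −X(X³+2)/(2X³+1)`, independent of `b`. -/
theorem elementary_desboves_lattes (b : ℂ) :
    (∀ x y z : ℂ,
      (desbovesF (-1) b 1 x y z).1 = x * (-x ^ 3 - 2 * z ^ 3) ∧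
      (desbovesF (-1) b 1 x y z).2.2 = z * (2 * x ^ 3 + z ^ 3)) ∧
    (∀ x y z : ℂ, z ≠ 0 → (desbovesF (-1) b 1 x y z).2.2 ≠ 0 →
      (desbovesF (-1) b 1 x y z).1 / (desbovesF (-1) b 1 x y z).2.2 =
        -(x / z) * ((x / z) ^ 3 + 2) / (2 * (x / z) ^ 3 + 1)) := by
  refine ⟨fun x y z =>
    ⟨desbovesF_fst_of_neg_one b 1 x y z, desbovesF_snd_snd_of_one (-1) b x y z⟩,
    fun x y z _ _ => ?_⟩
  rw [desbovesF_fst_of_neg_one, desbovesF_snd_snd_of_one, lattes_dehomogenize]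
end

section
/- Let Φ_k(x,y,z) = x²y² − (x²+y²)z² + kz⁴ (Cassini quartic) and F₀(x,y,z) = (X,Y,Z) where X = −2xy(x²+y²−2kz²), Y = y⁴−x⁴, Z = 2xy(x²−y²). Then Φ_k(X,Y,Z) = 16k·x²y²(x²−y²)⁴·Φ_k(x,y,z). In particular the Cassini curve Φ_k = 0 is invariant under the induced rational map of ℙ². -/
/-- The Cassini quartic `Φ_k(x,y,z) = x²y² − (x²+y²)z² + kz⁴` (Eq. (7.1)). -/
noncomputable def cassiniPhi (k x y z : ℂ) : ℂ :=
  x ^ 2 * y ^ 2 - (x ^ 2 + y ^ 2) * z ^ 2 + k * z ^ 4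

/-- The homogeneous map `F₀(x,y,z) = (X,Y,Z)` of Eq. (7.2) with parameter `a = 0`:
`X = −2xy(x²+y²−2kz²)`, `Y = y⁴−x⁴`, `Z = 2xy(x²−y²)`. -/
noncomputable def cassiniF0 (k x y z : ℂ) : ℂ × ℂ × ℂ :=
  (-2 * x * y * (x ^ 2 + y ^ 2 - 2 * k * z ^ 2),
   y ^ 4 - x ^ 4,
   2 * x * y * (x ^ 2 - y ^ 2))

theorem cassiniPhi_cassiniF0 (k x y z : ℂ) :
    cassiniPhi k (cassiniF0 k x y z).1 (cassiniF0 k x y z).2.1 (cassiniF0 k x y z).2.2 =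
      16 * k * x ^ 2 * y ^ 2 * (x ^ 2 - y ^ 2) ^ 4 * cassiniPhi k x y z := by
  simp only [cassiniPhi, cassiniF0]
  ring

/-- **Invariance of the Cassini quartic** (Eq. (7.4)).
One has the polynomial identity `Φ_k(X,Y,Z) = 16k·x²y²(x²−y²)⁴·Φ_k(x,y,z)`; in particular
the Cassini curve `Φ_k = 0` is invariant under the induced rational map of `ℙ²`. -/
theorem cassini_invariance (k x y z : ℂ) :
    cassiniPhi k (cassiniF0 k x y z).1 (cassiniF0 k x y z).2.1 (cassiniF0 k x y z).2.2 =
      16 * k * x ^ 2 * y ^ 2 * (x ^ 2 - y ^ 2) ^ 4 * cassiniPhi k x y z ∧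
    (cassiniPhi k x y z = 0 →
      cassiniPhi k (cassiniF0 k x y z).1 (cassiniF0 k x y z).2.1
        (cassiniF0 k x y z).2.2 = 0) :=
  ⟨cassiniPhi_cassiniF0 k x y z, fun h => by rw [cassiniPhi_cassiniF0, h, mul_zero]⟩
end

section
/- If a C²-smooth function x: ℝ → ℝ satisfies |x(t)| < α and |x''(t)| < β for all t, where α, β > 0, then |x'(t)| < √(2αβ) for all t. -/
open Set

lemma taylor_key (x : ℝ → ℝ) (β : ℝ) (hx : ContDiff ℝ 2 x)
    (hb : ∀ s, |deriv (deriv x) s| ≤ β) (t h : ℝ) (hh : 0 < h) :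
    |x (t + h) - x t - deriv x t * h| ≤ β * h ^ 2 / 2 := by
  have hlt : t < t + h := by linarith
  have hus : UniqueDiffOn ℝ (Icc t (t + h)) := uniqueDiffOn_Icc hlt
  have hdx : Differentiable ℝ x := hx.differentiable (by norm_num)
  have hdx' : ContDiff ℝ 1 (deriv x) := by
    have h2 : ContDiff ℝ ((1 : ℕ) + 1) x := by exact_mod_cast hx
    exact ((contDiff_succ_iff_deriv (n := 1)).mp h2).2.2
  have hdd : Differentiable ℝ (deriv x) := hdx'.differentiable (by norm_num)
  have hd1 : ∀ y ∈ Icc t (t + h), iteratedDerivWithin 1 x (Icc t (t + h)) y = deriv x y := by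
    intro y hy
    rw [iteratedDerivWithin_one]
    exact (hdx y).derivWithin (hus y hy)
  have hcd : ContDiffOn ℝ 1 x (Icc t (t + h)) := (hx.of_le one_le_two).contDiffOn
  have hdiff : DifferentiableOn ℝ (iteratedDerivWithin 1 x (Icc t (t + h))) (Ioo t (t + h)) := by
    apply DifferentiableOn.congr (hdd.differentiableOn (s := Ioo t (t + h)))
    intro y hy
    exact hd1 y (Ioo_subset_Icc_self hy)
  obtain ⟨ξ, hξ, heq⟩ := taylor_mean_remainder_lagrange (n := 1) hlt.ne
    (by rw [uIcc_of_le hlt.le]; exact hcd) (by rw [uIcc_of_le hlt.le, uIoo_of_le hlt.le]; exact hdiff)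
  rw [uIoo_of_le hlt.le] at hξ; rw [uIcc_of_le hlt.le] at heq
  have h2 : iteratedDerivWithin 2 x (Icc t (t + h)) ξ = deriv (deriv x) ξ := by
    have hξs : ξ ∈ Icc t (t + h) := Ioo_subset_Icc_self hξ
    rw [show (2 : ℕ) = 1 + 1 from rfl, iteratedDerivWithin_succ]
    rw [derivWithin_congr hd1 (hd1 ξ hξs)]
    exact (hdd ξ).derivWithin (hus ξ hξs)
  have hts : t ∈ Icc t (t + h) := ⟨le_refl t, le_of_lt hlt⟩
  have htayl : taylorWithinEval x 1 (Icc t (t + h)) t (t + h) = x t + h * deriv x t := by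
    simp [taylorWithinEval_succ, taylor_within_zero_eval, iteratedDerivWithin_one,
      (hdx t).derivWithin (hus t hts)]
  rw [htayl, h2] at heq
  have hrw : x (t + h) - x t - deriv x t * h = deriv (deriv x) ξ * h ^ 2 / 2 := by
    rw [show x (t + h) - x t - deriv x t * h = x (t + h) - (x t + h * deriv x t) by ring, heq]
    norm_num
  rw [hrw, abs_div, abs_mul, abs_of_nonneg (sq_nonneg h), abs_of_pos (show (0:ℝ) < 2 by norm_num)]
  gcongr
  exact hb ξ

/-- **A Derivative Inequality** (Lemma 7.14).
If a C²-smooth function `x : ℝ → ℝ` satisfies `|x(t)| < α` and `|x''(t)| < β` for all `t`,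
where `α, β > 0`, then `|x'(t)| < √(2αβ)` for all `t`. -/
theorem deriv_lt_sqrt_of_bounds (x : ℝ → ℝ) (α β : ℝ) (hα : 0 < α) (hβ : 0 < β)
    (hx : ContDiff ℝ 2 x)
    (hbound : ∀ t, |x t| < α)
    (hbound2 : ∀ t, |deriv (deriv x) t| < β) :
    ∀ t, |deriv x t| < Real.sqrt (2 * α * β) := by
  intro t
  set y : ℝ → ℝ := fun s => x (-s) with hy
  have hycd : ContDiff ℝ 2 y := hx.comp contDiff_neg
  have hdy : ∀ s, deriv y s = -deriv x (-s) := fun s => deriv_comp_neg x s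
  have hddy : ∀ s, deriv (deriv y) s = deriv (deriv x) (-s) := by
    intro s
    rw [funext hdy]
    rw [deriv_comp_neg (fun u => -deriv x u) s]
    simp
  set h : ℝ := Real.sqrt (2 * α / β) with hdef
  have hhpos : 0 < h := Real.sqrt_pos.mpr (by positivity)
  have hh2 : h ^ 2 = 2 * α / β := Real.sq_sqrt (by positivity)
  have hA := taylor_key x β hx (fun s => (hbound2 s).le) t h hhpos
  have hB0 := taylor_key y β hycd (fun s => by rw [hddy]; exact (hbound2 _).le) (-t) h hhpos
  rw [hdy] at hB0
  simp only [neg_neg] at hB0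
  have hB : |x (t - h) - x t + deriv x t * h| ≤ β * h ^ 2 / 2 := by
    have e : x (t - h) - x t + deriv x t * h = y (-t + h) - y (-t) - -deriv x t * h := by
      simp only [hy, neg_add_rev, neg_neg]
      ring_nf
    rw [e]; exact hB0
  set D := deriv x t
  set A := x (t + h) - x t - D * h with hAdef
  set B := x (t - h) - x t + D * h with hBdef
  have htri : |D * (2 * h)| ≤ |x (t + h)| + |x (t - h)| + |A| + |B| := by
    have e : D * (2 * h) = x (t + h) - x (t - h) - A + B := by
      rw [hAdef, hBdef]; ring
    rw [e]
    calc |x (t + h) - x (t - h) - A + B| ≤ |x (t + h) - x (t - h) - A| + |B| := abs_add_le _ _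
      _ ≤ |x (t + h) - x (t - h)| + |A| + |B| := by gcongr; exact abs_sub _ _
      _ ≤ |x (t + h)| + |x (t - h)| + |A| + |B| := by gcongr; exact abs_sub _ _
  have hβh2 : β * h ^ 2 = 2 * α := by
    rw [hh2]; field_simp
  have hkey : |D| * (2 * h) < 4 * α := by
    have h1 := hbound (t + h)
    have h2 := hbound (t - h)
    have : |D * (2 * h)| < 4 * α := by
      calc |D * (2 * h)| ≤ |x (t + h)| + |x (t - h)| + |A| + |B| := htri
        _ < α + α + β * h ^ 2 / 2 + β * h ^ 2 / 2 := by
            apply add_lt_add_of_lt_of_le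
            apply add_lt_add_of_lt_of_le
            exact add_lt_add h1 h2
            exact hA
            exact hB
        _ = 4 * α := by rw [hβh2]; ring
    rwa [abs_mul, abs_of_pos (by linarith : (0:ℝ) < 2 * h)] at this
  have hsqrt : Real.sqrt (2 * α * β) = 2 * α / h := by
    rw [show 2 * α * β = (2 * α / h) ^ 2 by
      rw [div_pow, hh2]; field_simp]
    exact Real.sqrt_sq (by positivity)
  rw [hsqrt, lt_div_iff₀ hhpos]
  linarith
end
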